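/- Let f be C² with f'' < 0 or f'' > 0, let p ∈ X be positive on (0,π), write X = H ⊕ ℝp with H the L²-orthogonal complement of p in X, and let Π : X → H be the projection. If M_θ = {u : W(u)(π) = θ} is nonempty, then Π restricted to M_θ is a bijection from M_θ onto H: every line {h + λp : λ ∈ ℝ}, h ∈ H, meets M_θ in exactly one point, and the intersection is transversal. -/

import Mathlib

open Real Set

lemma hasDerivAt_maxsq (y : ℝ) : HasDerivAt (fun x : ℝ => max x 0 ^ 2) (2 * max y 0) y := by
  rcases lt_trichotomy y 0 with hy | hy | hy
  · have hm : max y 0 = 0 := max_eq_right hy.le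
    rw [hm, mul_zero]
    have hev : (fun x : ℝ => max x 0 ^ 2) =ᶠ[nhds y] fun _ => (0:ℝ) := by
      filter_upwards [Iio_mem_nhds hy] with x hx
      have : x < 0 := hx
      simp [max_eq_right this.le]
    exact (hasDerivAt_const y (0:ℝ)).congr_of_eventuallyEq hev
  · subst hy
    rw [max_self, mul_zero]
    rw [hasDerivAt_iff_tendsto_slope]
    have hb : ∀ x : ℝ, ‖slope (fun x : ℝ => max x 0 ^ 2) 0 x‖ ≤ ‖x‖ := by
      intro x
      rcases le_or_gt x 0 with hx | hx
      · simp [slope, max_eq_right hx]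
      · have hm : max x 0 = x := max_eq_left hx.le
        simp only [slope_def_field, hm, max_self]
        rw [div_eq_mul_inv]
        have : (x ^ 2 - 0 ^ 2) * (x - 0)⁻¹ = x := by field_simp; ring
        rw [this]
    refine squeeze_zero_norm hb ?_
    have : Filter.Tendsto (fun x : ℝ => ‖x‖) (nhds 0) (nhds 0) := by
      simpa using continuous_norm.tendsto (0:ℝ)
    exact this.mono_left nhdsWithin_le_nhds
  · have hm : max y 0 = y := max_eq_left hy.le
    rw [hm]
    have hev : (fun x : ℝ => max x 0 ^ 2) =ᶠ[nhds y] fun x => x ^ 2 := by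
      filter_upwards [Ioi_mem_nhds hy] with x hx
      have : (0:ℝ) < x := hx
      simp [max_eq_left this.le]
    have h2 : HasDerivAt (fun x : ℝ => x ^ 2) (2 * y) y := by
      simpa [mul_comm] using hasDerivAt_pow 2 y
    exact h2.congr_of_eventuallyEq hev

lemma abs_sin_sq_sub (a b : ℝ) : |sin a ^ 2 - sin b ^ 2| ≤ |a - b| := by
  have hid : sin a ^ 2 - sin b ^ 2 = sin (a + b) * sin (a - b) := by
    rw [sin_add, sin_sub]
    nlinarith [sin_sq_add_cos_sq a, sin_sq_add_cos_sq b]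
  rw [hid, abs_mul]
  calc |sin (a+b)| * |sin (a-b)| ≤ 1 * |a - b| := by
        refine mul_le_mul ?_ (abs_sin_le_abs) (abs_nonneg _) zero_le_one
        exact abs_sin_le_one _
    _ = |a - b| := one_mul _

/-- one-sided scalar Grönwall on `[0, b]` with derivative within `Icc 0 b`. -/

lemma my_gronwall {g g' : ℝ → ℝ} {K ε b : ℝ}
    (hc : ContinuousOn g (Icc 0 b))
    (hd : ∀ x ∈ Ico 0 b, HasDerivWithinAt g (g' x) (Icc 0 b) x)
    (h0 : g 0 ≤ 0) (hK : ∀ x ∈ Ico 0 b, g' x ≤ K * g x + ε) :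
    ∀ x ∈ Icc 0 b, g x ≤ gronwallBound 0 K ε x := by
  intro x hx
  have := le_gronwallBound_of_liminf_deriv_right_le (f := g) (f' := g') (δ := 0) (K := K)
    (ε := ε) (a := 0) (b := b) hc
    (fun t ht r hr =>
      ((hd t ht).mono_of_mem_nhdsWithin (Icc_mem_nhdsGE_of_mem ⟨ht.1, ht.2⟩)).liminf_right_slope_le hr)
    h0 hK x hx
  simpa using this

lemma bound_on_Icc {g : ℝ → ℝ} {a b : ℝ} (hg : ContinuousOn g (Icc a b)) :
    ∃ B : ℝ, 0 ≤ B ∧ ∀ t ∈ Icc a b, |g t| ≤ B := by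
  obtain ⟨B, hB⟩ := (isCompact_Icc (a := a) (b := b)).exists_bound_of_continuousOn hg
  exact ⟨max B 0, le_max_right _ _, fun t ht => le_trans (hB t ht) (le_max_left _ _)⟩

/-- deriv f is Lipschitz on [-M, M] for C² f -/

lemma lip_deriv {f : ℝ → ℝ} (hf : ContDiff ℝ 2 f) (M : ℝ) :
    ∃ L : ℝ, 0 ≤ L ∧ ∀ x y : ℝ, |x| ≤ M → |y| ≤ M →
      |deriv f x - deriv f y| ≤ L * |x - y| := by
  have h2 : ContDiff ℝ 1 (deriv f) := by
    have h21 : ContDiff ℝ ((1:ℕ) + 1) f := by exact_mod_cast hf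
    exact (contDiff_succ_iff_deriv.mp h21).2.2
  have hdd : Continuous (deriv (deriv f)) := h2.continuous_deriv le_rfl
  obtain ⟨L, hL0, hL⟩ := bound_on_Icc (a := -M) (b := M) hdd.continuousOn
  refine ⟨L, hL0, fun x y hx hy => ?_⟩
  have hxm : x ∈ Icc (-M) M := abs_le.1 hx
  have hym : y ∈ Icc (-M) M := abs_le.1 hy
  have := (convex_Icc (-M) M).norm_image_sub_le_of_norm_deriv_le (f := deriv f)
    (fun z _ => (h2.differentiable one_ne_zero).differentiableAt)
    (fun z hz => hL z hz) hym hxm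
  simpa [Real.norm_eq_abs, abs_sub_comm] using this

lemma prufer_le {q1 q2 W1 W2 : ℝ → ℝ} {C ε : ℝ} (hε : 0 ≤ ε)
    (hC : ∀ t ∈ Icc 0 π, 1 + |q1 t| ≤ C)
    (hq : ∀ t ∈ Icc 0 π, q1 t ≤ q2 t + ε)
    (h0 : W2 0 ≤ W1 0)
    (hW1 : ∀ t ∈ Icc 0 π, HasDerivWithinAt W1
      (cos (W1 t) ^ 2 - q1 t * sin (W1 t) ^ 2) (Icc 0 π) t)
    (hW2 : ∀ t ∈ Icc 0 π, HasDerivWithinAt W2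
      (cos (W2 t) ^ 2 - q2 t * sin (W2 t) ^ 2) (Icc 0 π) t) :
    ∀ t ∈ Icc 0 π, W2 t - W1 t ≤ gronwallBound 0 C ε t := by
  have hπ : (0:ℝ) < π := Real.pi_pos
  have hC1 : (1:ℝ) ≤ C := le_trans (le_add_of_nonneg_right (abs_nonneg _)) (hC 0 ⟨le_refl _, hπ.le⟩)
  have hCpos : (0:ℝ) < C := lt_of_lt_of_le one_pos hC1
  set g : ℝ → ℝ := fun x => gronwallBound 0 C ε x with hg
  have hgd : ∀ x : ℝ, HasDerivAt g (C * g x + ε) x := fun x => hasDerivAt_gronwallBound 0 C ε x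
  have hgc : Continuous g := by
    rw [continuous_iff_continuousAt]; exact fun x => (hgd x).continuousAt
  have hg0 : g 0 = 0 := gronwallBound_x0 0 C ε
  have hgnn : ∀ x : ℝ, 0 ≤ x → 0 ≤ g x := by
    intro x hx
    rw [hg]
    rw [gronwallBound_of_K_ne_0 hCpos.ne']
    have h1 : (1:ℝ) ≤ exp (C * x) := by
      rw [← exp_zero]; exact exp_le_exp.2 (by positivity)
    have : 0 ≤ ε / C := by positivity
    nlinarith
  set D : ℝ → ℝ := fun t => W2 t - W1 t - g t with hD
  set φ : ℝ → ℝ := fun t => max (D t) 0 ^ 2 with hφ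
  have hW1c : ContinuousOn W1 (Icc 0 π) := fun t ht => (hW1 t ht).continuousWithinAt
  have hW2c : ContinuousOn W2 (Icc 0 π) := fun t ht => (hW2 t ht).continuousWithinAt
  have hDc : ContinuousOn D (Icc 0 π) := (hW2c.sub hW1c).sub (hgc.continuousOn)
  have hφc : ContinuousOn φ (Icc 0 π) := by
    have : Continuous fun y : ℝ => max y 0 ^ 2 := by fun_prop
    exact this.comp_continuousOn hDc
  -- derivative of φ and the key inequality
  have key : ∀ x ∈ Ico 0 π,
      HasDerivWithinAt φ (2 * max (D x) 0 *
        ((cos (W2 x) ^ 2 - q2 x * sin (W2 x) ^ 2)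
          - (cos (W1 x) ^ 2 - q1 x * sin (W1 x) ^ 2) - (C * g x + ε))) (Icc 0 π) x ∧
      2 * max (D x) 0 *
        ((cos (W2 x) ^ 2 - q2 x * sin (W2 x) ^ 2)
          - (cos (W1 x) ^ 2 - q1 x * sin (W1 x) ^ 2) - (C * g x + ε)) ≤ (2*C) * φ x + 0 := by
    intro x hx
    have hxI : x ∈ Icc 0 π := ⟨hx.1, hx.2.le⟩
    have hDd : HasDerivWithinAt D
        ((cos (W2 x) ^ 2 - q2 x * sin (W2 x) ^ 2)
          - (cos (W1 x) ^ 2 - q1 x * sin (W1 x) ^ 2) - (C * g x + ε)) (Icc 0 π) x :=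
      ((hW2 x hxI).sub (hW1 x hxI)).sub ((hgd x).hasDerivWithinAt)
    refine ⟨(hasDerivAt_maxsq (D x)).comp_hasDerivWithinAt x hDd, ?_⟩
    rcases le_or_gt (D x) 0 with hDx | hDx
    · rw [max_eq_right hDx]
      have : φ x = 0 := by rw [hφ]; simp [max_eq_right hDx]
      rw [this]; norm_num
    · rw [max_eq_left hDx.le]
      have hφx : φ x = D x ^ 2 := by rw [hφ]; simp [max_eq_left hDx.le]
      rw [hφx]
      have hgx : 0 ≤ g x := hgnn x hx.1
      -- main pointwise estimate
      have hrw : W2 x - W1 x = D x + g x := by rw [hD]; ring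
      have habs : |sin (W1 x) ^ 2 - sin (W2 x) ^ 2| ≤ D x + g x := by
        have := abs_sin_sq_sub (W1 x) (W2 x)
        have h2 : |W1 x - W2 x| = D x + g x := by
          rw [abs_sub_comm, hrw, abs_of_pos (by positivity)]
        linarith [this, h2.le]
      have hc1 : cos (W1 x) ^ 2 = 1 - sin (W1 x) ^ 2 := by
        nlinarith [sin_sq_add_cos_sq (W1 x)]
      have hc2 : cos (W2 x) ^ 2 = 1 - sin (W2 x) ^ 2 := by
        nlinarith [sin_sq_add_cos_sq (W2 x)]
      have hqx := hq x hxI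
      have hCx := hC x hxI
      have hs2a : (0:ℝ) ≤ sin (W2 x) ^ 2 := sq_nonneg _
      have hs2b : sin (W2 x) ^ 2 ≤ 1 := sin_sq_le_one _
      have e1 : (q1 x - q2 x) * sin (W2 x) ^ 2 ≤ ε := by
        rcases le_or_gt (q1 x - q2 x) 0 with hqq | hqq
        · nlinarith
        · nlinarith
      have e2 : (1 + q1 x) * (sin (W1 x) ^ 2 - sin (W2 x) ^ 2) ≤ C * (D x + g x) := by
        calc (1 + q1 x) * (sin (W1 x) ^ 2 - sin (W2 x) ^ 2)
            ≤ |1 + q1 x| * |sin (W1 x) ^ 2 - sin (W2 x) ^ 2| := by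
              rw [← abs_mul]; exact le_abs_self _
          _ ≤ C * (D x + g x) := by
              apply mul_le_mul _ habs (abs_nonneg _) hCpos.le
              calc |1 + q1 x| ≤ 1 + |q1 x| := by
                    calc |1 + q1 x| ≤ |(1:ℝ)| + |q1 x| := abs_add_le _ _
                      _ = 1 + |q1 x| := by rw [abs_one]
                _ ≤ C := hCx
      have hLHS : (cos (W2 x) ^ 2 - q2 x * sin (W2 x) ^ 2)
          - (cos (W1 x) ^ 2 - q1 x * sin (W1 x) ^ 2) - (C * g x + ε)
          = (1 + q1 x) * (sin (W1 x) ^ 2 - sin (W2 x) ^ 2)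
            + (q1 x - q2 x) * sin (W2 x) ^ 2 - (C * g x + ε) := by
        rw [hc1, hc2]; ring
      have core : (cos (W2 x) ^ 2 - q2 x * sin (W2 x) ^ 2)
          - (cos (W1 x) ^ 2 - q1 x * sin (W1 x) ^ 2) - (C * g x + ε) ≤ C * D x := by
        rw [hLHS]; linarith [e1, e2]
      calc 2 * D x * ((cos (W2 x) ^ 2 - q2 x * sin (W2 x) ^ 2)
          - (cos (W1 x) ^ 2 - q1 x * sin (W1 x) ^ 2) - (C * g x + ε))
          ≤ 2 * D x * (C * D x) := by
            apply mul_le_mul_of_nonneg_left core (by positivity)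
        _ = 2 * C * D x ^ 2 + 0 := by ring
  have hφle : ∀ x ∈ Icc 0 π, φ x ≤ gronwallBound 0 (2*C) 0 x := by
    apply my_gronwall hφc (fun x hx => (key x hx).1) ?_ ?_
    · have hD0 : D 0 ≤ 0 := by
        show W2 0 - W1 0 - g 0 ≤ 0
        rw [hg0]; linarith
      show max (D 0) 0 ^ 2 ≤ 0
      rw [max_eq_right hD0]; norm_num
    · exact fun x hx => (key x hx).2
  intro t ht
  have h1 := hφle t ht
  rw [gronwallBound_ε0_δ0] at h1
  have hφt : φ t = max (D t) 0 ^ 2 := rfl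
  rw [hφt] at h1
  have hmax : max (D t) 0 = 0 := by nlinarith [le_max_right (D t) 0, sq_nonneg (max (D t) 0)]
  have hDt : D t ≤ 0 := by
    have h2 := le_max_left (D t) 0
    rw [hmax] at h2; exact h2
  have h3 : W2 t - W1 t - gronwallBound 0 C ε t ≤ 0 := hDt
  linarith

lemma prufer_lt {q1 q2 W1 W2 : ℝ → ℝ} {C : ℝ}
    (hC : ∀ t ∈ Icc 0 π, 1 + |q1 t| ≤ C)
    (hq : ∀ t ∈ Icc 0 π, q1 t ≤ q2 t)
    (hqs : ∀ t ∈ Ioo 0 π, q1 t < q2 t)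
    (hq1c : ContinuousOn q1 (Icc 0 π)) (hq2c : ContinuousOn q2 (Icc 0 π))
    (h0 : W2 0 = W1 0)
    (hW1 : ∀ t ∈ Icc 0 π, HasDerivWithinAt W1
      (cos (W1 t) ^ 2 - q1 t * sin (W1 t) ^ 2) (Icc 0 π) t)
    (hW2 : ∀ t ∈ Icc 0 π, HasDerivWithinAt W2
      (cos (W2 t) ^ 2 - q2 t * sin (W2 t) ^ 2) (Icc 0 π) t) :
    W2 π < W1 π := by
  have hπ : (0:ℝ) < π := Real.pi_pos
  have hC1 : (1:ℝ) ≤ C := le_trans (le_add_of_nonneg_right (abs_nonneg _)) (hC 0 ⟨le_refl _, hπ.le⟩)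
  have hCpos : (0:ℝ) < C := lt_of_lt_of_le one_pos hC1
  have hW1c : ContinuousOn W1 (Icc 0 π) := fun t ht => (hW1 t ht).continuousWithinAt
  have hW2c : ContinuousOn W2 (Icc 0 π) := fun t ht => (hW2 t ht).continuousWithinAt
  -- weak comparison
  have hDle : ∀ t ∈ Icc 0 π, W2 t - W1 t ≤ 0 := by
    intro t ht
    have := prufer_le (le_refl (0:ℝ)) hC (fun t ht => by
      rw [add_zero]; exact hq t ht) h0.le hW1 hW2 t ht
    rwa [gronwallBound_ε0_δ0] at this
  -- find interior point where sin (W2 t) ≠ 0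
  have hts : ∃ ts ∈ Ioo (0:ℝ) π, sin (W2 ts) ≠ 0 := by
    by_contra hcon
    push_neg at hcon
    set t0 : ℝ := π/2 with ht0def
    have ht0 : t0 ∈ Ioo (0:ℝ) π := ⟨by positivity, by linarith⟩
    have ht0I : t0 ∈ Icc (0:ℝ) π := ⟨ht0.1.le, ht0.2.le⟩
    have hdd : HasDerivAt W2 1 t0 := by
      have h := (hW2 t0 ht0I).hasDerivAt (Icc_mem_nhds ht0.1 ht0.2)
      have hs : sin (W2 t0) = 0 := hcon t0 ht0
      have : cos (W2 t0) ^ 2 - q2 t0 * sin (W2 t0) ^ 2 = 1 := by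
        rw [hs]; nlinarith [sin_sq_add_cos_sq (W2 t0)]
      rwa [this] at h
    have hcont : ContinuousAt W2 t0 := hdd.continuousAt
    obtain ⟨δ1, hδ1, hball⟩ := Metric.continuousAt_iff.1 hcont π hπ
    set δ2 : ℝ := min δ1 (min t0 (π - t0)) with hδ2def
    have hδ2 : 0 < δ2 := by
      apply lt_min hδ1
      exact lt_min ht0.1 (by linarith [ht0.2])
    rw [hasDerivAt_iff_tendsto_slope] at hdd
    have hmem : {t : ℝ | 1/2 < slope W2 t0 t} ∈ nhdsWithin t0 {t0}ᶜ :=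
      hdd (Ioi_mem_nhds (by norm_num))
    have hmem2 : Metric.ball t0 δ2 ∈ nhdsWithin t0 {t0}ᶜ :=
      nhdsWithin_le_nhds (Metric.ball_mem_nhds _ hδ2)
    obtain ⟨t, htslope, htball⟩ := Filter.nonempty_of_mem (Filter.inter_mem hmem hmem2)
    have htne : W2 t ≠ W2 t0 := by
      intro heq
      have ht' : 1/2 < slope W2 t0 t := htslope
      have hz : slope W2 t0 t = 0 := by simp [slope_def_field, heq]
      rw [hz] at ht'
      norm_num at ht'
    have htd : dist t t0 < δ2 := Metric.mem_ball.1 htball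
    have htIoo : t ∈ Ioo (0:ℝ) π := by
      have h1 : |t - t0| < δ2 := by rwa [Real.dist_eq] at htd
      have h2 := abs_lt.1 h1
      constructor
      · have : δ2 ≤ t0 := le_trans (min_le_right _ _) (min_le_left _ _)
        linarith
      · have : δ2 ≤ π - t0 := le_trans (min_le_right _ _) (min_le_right _ _)
        linarith
    have hWdist : |W2 t - W2 t0| < π := by
      have : dist t t0 < δ1 := lt_of_lt_of_le htd (min_le_left _ _)
      have := hball this
      rwa [Real.dist_eq] at this
    obtain ⟨k, hk⟩ := Real.sin_eq_zero_iff.1 (hcon t htIoo)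
    obtain ⟨m, hm⟩ := Real.sin_eq_zero_iff.1 (hcon t0 ht0)
    have hkm : ((k - m : ℤ) : ℝ) * π = W2 t - W2 t0 := by push_cast; rw [← hk, ← hm]; ring
    have habs0 : |((k - m : ℤ) : ℝ) * π| < π := by rw [hkm]; exact hWdist
    have habs : |((k - m : ℤ) : ℝ)| * π < π := by
      rwa [abs_mul, abs_of_pos hπ] at habs0
    have hlt1 : |((k - m : ℤ) : ℝ)| < 1 := by
      by_contra hge
      push_neg at hge
      nlinarith
    have h2 : |k - m| < 1 := by
      exact_mod_cast (by rwa [← Int.cast_abs] at hlt1 : ((|k - m| : ℤ) : ℝ) < 1)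
    have : k = m := by have := abs_lt.mp h2; omega
    exact htne (by rw [← hk, ← hm, this])
  obtain ⟨ts, htsIoo, htssin⟩ := hts
  -- find a closed interval around ts where (q2 - q1) * sin (W2)^2 > 0
  set G : ℝ → ℝ := fun t => (q2 t - q1 t) * sin (W2 t) ^ 2 with hGdef
  have hGc : ContinuousOn G (Icc 0 π) :=
    (hq2c.sub hq1c).mul (((Real.continuous_sin.comp_continuousOn hW2c)).pow 2)
  have htsI : ts ∈ Icc (0:ℝ) π := ⟨htsIoo.1.le, htsIoo.2.le⟩
  have hGat : ContinuousAt G ts :=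
    (hGc ts htsI).continuousAt (Icc_mem_nhds htsIoo.1 htsIoo.2)
  have hGts : 0 < G ts := by
    have h1 := hqs ts htsIoo
    have h2 : 0 < sin (W2 ts) ^ 2 := by positivity
    exact mul_pos (by linarith) h2
  have hnb : {x | 0 < G x} ∩ Ioo 0 π ∈ nhds ts := by
    apply Filter.inter_mem
    · exact hGat.preimage_mem_nhds (Ioi_mem_nhds hGts)
    · exact Ioo_mem_nhds htsIoo.1 htsIoo.2
  obtain ⟨δ, hδpos, hδsub⟩ := Metric.mem_nhds_iff.1 hnb
  set α : ℝ := ts - δ/2 with hα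
  set β : ℝ := ts + δ/2 with hβ
  have hαβ : α < β := by rw [hα, hβ]; linarith
  have hsub : Icc α β ⊆ {x | 0 < G x} ∩ Ioo 0 π := by
    intro x hx
    apply hδsub
    rw [Metric.mem_ball, Real.dist_eq, abs_lt]
    rcases hx with ⟨h1, h2⟩
    constructor <;> [skip; skip] <;> simp only [hα, hβ] at h1 h2 <;> linarith
  have hIccsub : Icc α β ⊆ Icc 0 π := by
    intro x hx
    have := hsub hx
    exact ⟨this.2.1.le, this.2.2.le⟩
  -- the function F
  set F : ℝ → ℝ := fun t => (W2 t - W1 t) * exp (C * t) with hF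
  have hFc : ContinuousOn F (Icc 0 π) :=
    (hW2c.sub hW1c).mul (Real.continuous_exp.comp (continuous_const.mul continuous_id)).continuousOn
  have hFd : ∀ x ∈ Ioo (0:ℝ) π, HasDerivAt F
      (((cos (W2 x) ^ 2 - q2 x * sin (W2 x) ^ 2) - (cos (W1 x) ^ 2 - q1 x * sin (W1 x) ^ 2))
        * exp (C * x) + (W2 x - W1 x) * (C * exp (C * x))) x := by
    intro x hx
    have hxI : x ∈ Icc (0:ℝ) π := ⟨hx.1.le, hx.2.le⟩
    have h2 := (hW2 x hxI).hasDerivAt (Icc_mem_nhds hx.1 hx.2)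
    have h1 := (hW1 x hxI).hasDerivAt (Icc_mem_nhds hx.1 hx.2)
    have hexp : HasDerivAt (fun t => exp (C * t)) (C * exp (C * x)) x := by
      have := (Real.hasDerivAt_exp (C * x)).comp x ((hasDerivAt_id x).const_mul C)
      simpa [mul_comm, Function.comp_def] using this
    exact (h2.sub h1).mul hexp
  -- derivative bound
  have hFd_le : ∀ x ∈ Ioo (0:ℝ) π,
      ((cos (W2 x) ^ 2 - q2 x * sin (W2 x) ^ 2) - (cos (W1 x) ^ 2 - q1 x * sin (W1 x) ^ 2))
        * exp (C * x) + (W2 x - W1 x) * (C * exp (C * x)) ≤ exp (C * x) * (-(G x)) := by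
    intro x hx
    have hxI : x ∈ Icc (0:ℝ) π := ⟨hx.1.le, hx.2.le⟩
    have hDx : W2 x - W1 x ≤ 0 := hDle x hxI
    have habs : |sin (W1 x) ^ 2 - sin (W2 x) ^ 2| ≤ W1 x - W2 x := by
      have h := abs_sin_sq_sub (W1 x) (W2 x)
      have h2 : |W1 x - W2 x| = W1 x - W2 x := abs_of_nonneg (by linarith)
      linarith [h, h2.le]
    have hc1 : cos (W1 x) ^ 2 = 1 - sin (W1 x) ^ 2 := by nlinarith [sin_sq_add_cos_sq (W1 x)]
    have hc2 : cos (W2 x) ^ 2 = 1 - sin (W2 x) ^ 2 := by nlinarith [sin_sq_add_cos_sq (W2 x)]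
    have hCx := hC x hxI
    have e2 : (1 + q1 x) * (sin (W1 x) ^ 2 - sin (W2 x) ^ 2) ≤ C * (W1 x - W2 x) := by
      calc (1 + q1 x) * (sin (W1 x) ^ 2 - sin (W2 x) ^ 2)
          ≤ |1 + q1 x| * |sin (W1 x) ^ 2 - sin (W2 x) ^ 2| := by
            rw [← abs_mul]; exact le_abs_self _
        _ ≤ C * (W1 x - W2 x) := by
            apply mul_le_mul _ habs (abs_nonneg _) hCpos.le
            calc |1 + q1 x| ≤ |(1:ℝ)| + |q1 x| := abs_add_le _ _
              _ = 1 + |q1 x| := by rw [abs_one]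
              _ ≤ C := hCx
    have hLHS : (cos (W2 x) ^ 2 - q2 x * sin (W2 x) ^ 2) - (cos (W1 x) ^ 2 - q1 x * sin (W1 x) ^ 2)
        = (1 + q1 x) * (sin (W1 x) ^ 2 - sin (W2 x) ^ 2) + (q1 x - q2 x) * sin (W2 x) ^ 2 := by
      rw [hc1, hc2]; ring
    have hcore : (cos (W2 x) ^ 2 - q2 x * sin (W2 x) ^ 2) - (cos (W1 x) ^ 2 - q1 x * sin (W1 x) ^ 2)
        + C * (W2 x - W1 x) ≤ -(G x) := by
      have hGx : G x = (q2 x - q1 x) * sin (W2 x) ^ 2 := rfl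
      rw [hLHS, hGx]
      nlinarith [e2]
    have hexp_pos : 0 < exp (C * x) := exp_pos _
    calc ((cos (W2 x) ^ 2 - q2 x * sin (W2 x) ^ 2) - (cos (W1 x) ^ 2 - q1 x * sin (W1 x) ^ 2))
        * exp (C * x) + (W2 x - W1 x) * (C * exp (C * x))
        = exp (C * x) * ((cos (W2 x) ^ 2 - q2 x * sin (W2 x) ^ 2)
            - (cos (W1 x) ^ 2 - q1 x * sin (W1 x) ^ 2) + C * (W2 x - W1 x)) := by ring
      _ ≤ exp (C * x) * (-(G x)) := by
          exact mul_le_mul_of_nonneg_left hcore hexp_pos.le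
  -- F is antitone on [0,π]
  have hG_nonneg : ∀ x ∈ Ioo (0:ℝ) π, 0 ≤ G x := by
    intro x hx
    have := hqs x hx
    have : 0 ≤ q2 x - q1 x := by linarith
    positivity
  have hFanti : AntitoneOn F (Icc 0 π) := by
    apply antitoneOn_of_deriv_nonpos (convex_Icc 0 π) hFc
    · intro x hx
      rw [interior_Icc] at hx
      exact ((hFd x hx).differentiableAt).differentiableWithinAt
    · intro x hx
      rw [interior_Icc] at hx
      rw [(hFd x hx).deriv]
      have := hFd_le x hx
      have := hG_nonneg x hx
      nlinarith [exp_pos (C * x)]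
  -- F strictly decreases on [α, β]
  have hFstrict : StrictAntiOn F (Icc α β) := by
    apply strictAntiOn_of_deriv_neg (convex_Icc α β) (hFc.mono hIccsub)
    intro x hx
    rw [interior_Icc] at hx
    have hxIoo : x ∈ Ioo (0:ℝ) π := (hsub ⟨hx.1.le, hx.2.le⟩).2
    rw [(hFd x hxIoo).deriv]
    have h1 := hFd_le x hxIoo
    have h2 : 0 < G x := (hsub ⟨hx.1.le, hx.2.le⟩).1
    nlinarith [exp_pos (C * x)]
  -- assemble
  have hαI : α ∈ Icc (0:ℝ) π := hIccsub ⟨le_refl _, hαβ.le⟩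
  have hβI : β ∈ Icc (0:ℝ) π := hIccsub ⟨hαβ.le, le_refl _⟩
  have h1 : F π ≤ F β := hFanti hβI (right_mem_Icc.2 hπ.le) hβI.2
  have h2 : F β < F α := hFstrict (left_mem_Icc.2 hαβ.le) (right_mem_Icc.2 hαβ.le) hαβ
  have h3 : F α ≤ F 0 := hFanti (left_mem_Icc.2 hπ.le) hαI hαI.1
  have hF0 : F 0 = 0 := by rw [hF]; simp [h0]
  have hFπ : F π < 0 := by linarith
  have : (W2 π - W1 π) * exp (C * π) < 0 := hFπ
  nlinarith [exp_pos (C * π)]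

lemma approx_lemma {u h p : ℝ → ℝ} (hu : Continuous u) (hh : Continuous h)
    (hp : Continuous p) (hpnn : ∀ t ∈ Icc 0 π, 0 ≤ p t)
    (hppos : ∀ t ∈ Ioo (0:ℝ) π, 0 < p t)
    (h00 : u 0 = h 0) (hππ : u π = h π) {ρ : ℝ} (hρ : 0 < ρ) :
    ∃ lam : ℝ, 0 ≤ lam ∧ ∀ t ∈ Icc (0:ℝ) π,
      u t - min (u t) (h t + lam * p t) ≤ ρ := by
  have hπ : (0:ℝ) < π := Real.pi_pos
  set A : Set ℝ := {t ∈ Icc (0:ℝ) π | ρ ≤ u t - h t} with hA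
  have hAc : IsCompact A := by
    apply (isCompact_Icc (a := (0:ℝ)) (b := π)).of_isClosed_subset
    · exact isClosed_Icc.inter (isClosed_le continuous_const (hu.sub hh))
    · exact fun t ht => ht.1
  have hAsub : A ⊆ Ioo 0 π := by
    rintro t ⟨htI, htρ⟩
    rcases eq_or_lt_of_le htI.1 with h0 | h0
    · exfalso; rw [← h0] at htρ; rw [h00] at htρ; simp at htρ; linarith
    rcases eq_or_lt_of_le htI.2 with hπ' | hπ'
    · exfalso; rw [hπ'] at htρ; rw [hππ] at htρ; simp at htρ; linarith
    exact ⟨h0, hπ'⟩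
  have key : ∀ lam : ℝ, 0 ≤ lam → (∀ t ∈ A, u t - h t ≤ lam * p t) →
      ∀ t ∈ Icc (0:ℝ) π, u t - min (u t) (h t + lam * p t) ≤ ρ := by
    intro lam hlam hdom t htI
    have hrw : u t - min (u t) (h t + lam * p t)
        = max (u t - u t) (u t - (h t + lam * p t)) := by
      rcases le_total (u t) (h t + lam * p t) with hle | hle
      · rw [min_eq_left hle, max_eq_left (by linarith)]
      · rw [min_eq_right hle, max_eq_right (by linarith)]
    rw [hrw, max_le_iff]
    constructor
    · simp; exact hρ.le
    · by_cases htA : t ∈ A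
      · linarith [hdom t htA]
      · have : ¬ ρ ≤ u t - h t := fun hc => htA ⟨htI, hc⟩
        push_neg at this
        have hpt : 0 ≤ lam * p t := mul_nonneg hlam (hpnn t htI)
        linarith
  rcases A.eq_empty_or_nonempty with hAe | hAne
  · refine ⟨0, le_refl _, key 0 (le_refl _) ?_⟩
    intro t htA; rw [hAe] at htA; exact absurd htA (notMem_empty t)
  · obtain ⟨t₁, ht₁A, hmin⟩ := hAc.exists_isMinOn hAne hp.continuousOn
    have hpt₁ : 0 < p t₁ := hppos t₁ (hAsub ht₁A)
    obtain ⟨tM, _, hM0⟩ := (isCompact_Icc (a := (0:ℝ)) (b := π)).exists_isMaxOn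
      (nonempty_Icc.2 hπ.le) (hu.sub hh).continuousOn
    set M : ℝ := u tM - h tM with hMdef
    have hM : ∀ t ∈ Icc (0:ℝ) π, u t - h t ≤ M := fun t ht => hM0 ht
    set lam : ℝ := max 0 (M / p t₁) with hlam
    refine ⟨lam, le_max_left _ _, key lam (le_max_left _ _) ?_⟩
    intro t htA
    have h1 : u t - h t ≤ M := hM t ⟨(hAsub htA).1.le, (hAsub htA).2.le⟩
    have h2 : p t₁ ≤ p t := hmin htA
    have h3 : M / p t₁ ≤ lam := le_max_right _ _
    have h4 : M ≤ lam * p t₁ := by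
      rw [← div_le_iff₀ hpt₁] at *
      exact h3
    calc u t - h t ≤ M := h1
      _ ≤ lam * p t₁ := h4
      _ ≤ lam * p t := mul_le_mul_of_nonneg_left h2 (le_max_left _ _)

lemma V_cont {f p h : ℝ → ℝ} (hf : ContDiff ℝ 2 f) (hp : Continuous p) (hh : Continuous h)
    (WW : (ℝ → ℝ) → ℝ → ℝ)
    (hWW0 : ∀ u : ℝ → ℝ, ContinuousOn u (Icc 0 π) → WW u 0 = 0)
    (hWW : ∀ u : ℝ → ℝ, ContinuousOn u (Icc 0 π) → ∀ t ∈ Icc (0:ℝ) π,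
      HasDerivWithinAt (WW u)
        (cos (WW u t) ^ 2 - deriv f (u t) * sin (WW u t) ^ 2) (Icc 0 π) t) :
    Continuous (fun lam : ℝ => WW (fun t => h t + lam * p t) π) := by
  have hπ : (0:ℝ) < π := Real.pi_pos
  rw [continuous_iff_continuousAt]
  intro lam0
  obtain ⟨Bh, hBh0, hBh⟩ := bound_on_Icc (a := (0:ℝ)) (b := π) hh.continuousOn
  obtain ⟨Bp, hBp0, hBp⟩ := bound_on_Icc (a := (0:ℝ)) (b := π) hp.continuousOn
  set M : ℝ := Bh + (|lam0| + 1) * Bp with hM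
  have hM0 : 0 ≤ M := by positivity
  have hrange : ∀ lam : ℝ, |lam - lam0| ≤ 1 → ∀ t ∈ Icc (0:ℝ) π,
      |h t + lam * p t| ≤ M := by
    intro lam hlam t ht
    have h1 : |lam| ≤ |lam0| + 1 := by
      have := abs_sub_abs_le_abs_sub lam lam0
      linarith
    calc |h t + lam * p t| ≤ |h t| + |lam| * |p t| := by
          rw [← abs_mul]; exact abs_add_le _ _
      _ ≤ Bh + (|lam0| + 1) * Bp := by
          have := hBh t ht; have := hBp t ht
          have h2 : |lam| * |p t| ≤ (|lam0| + 1) * Bp := by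
            apply mul_le_mul h1 (hBp t ht) (abs_nonneg _) (by positivity)
          linarith
      _ = M := hM.symm
  obtain ⟨B, hB0, hB⟩ := bound_on_Icc (a := -M) (b := M) (hf.continuous_deriv one_le_two).continuousOn
  obtain ⟨L, hL0, hL⟩ := lip_deriv hf M
  set C : ℝ := 1 + B with hC
  have hCpos : (0:ℝ) < C := by positivity
  set KK : ℝ := L * Bp / C * (exp (C * π) - 1) with hKK
  have hKK0 : 0 ≤ KK := by
    have : (1:ℝ) ≤ exp (C * π) := by rw [← exp_zero]; exact exp_le_exp.2 (by positivity)
    have h1 : 0 ≤ L * Bp / C := by positivity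
    nlinarith
  -- local Lipschitz estimate
  have hlip : ∀ lam mu : ℝ, |lam - lam0| ≤ 1 → |mu - lam0| ≤ 1 →
      WW (fun t => h t + lam * p t) π - WW (fun t => h t + mu * p t) π ≤ KK * |lam - mu| := by
    intro lam mu hlam hmu
    set u1 : ℝ → ℝ := fun t => h t + mu * p t with hu1
    set u2 : ℝ → ℝ := fun t => h t + lam * p t with hu2
    have hu1c : Continuous u1 := by fun_prop
    have hu2c : Continuous u2 := by fun_prop
    set ε : ℝ := L * Bp * |lam - mu| with hε
    have hε0 : 0 ≤ ε := by positivity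
    have key := prufer_le (q1 := fun t => deriv f (u1 t)) (q2 := fun t => deriv f (u2 t))
      (W1 := WW u1) (W2 := WW u2) (C := C) (ε := ε) hε0
      (fun t ht => by
        have hu1M : |u1 t| ≤ M := hrange mu hmu t ht
        have := hB (u1 t) (abs_le.1 hu1M)
        rw [hC]
        linarith)
      (fun t ht => by
        have h1 := hL (u1 t) (u2 t) (hrange mu hmu t ht) (hrange lam hlam t ht)
        have h2 : |u1 t - u2 t| = |mu - lam| * |p t| := by
          rw [hu1, hu2, ← abs_mul]; congr 1; ring
        have h3 : |u1 t - u2 t| ≤ |lam - mu| * Bp := by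
          rw [h2, abs_sub_comm mu lam]
          exact mul_le_mul_of_nonneg_left (hBp t ht) (abs_nonneg _)
        have h4 : L * |u1 t - u2 t| ≤ ε := by
          rw [hε]
          calc L * |u1 t - u2 t| ≤ L * (|lam - mu| * Bp) :=
                mul_le_mul_of_nonneg_left h3 hL0
            _ = L * Bp * |lam - mu| := by ring
        have h5 := (abs_le.1 h1).2
        linarith)
      (by rw [hWW0 u1 hu1c.continuousOn, hWW0 u2 hu2c.continuousOn])
      (hWW u1 hu1c.continuousOn) (hWW u2 hu2c.continuousOn) π (right_mem_Icc.2 hπ.le)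
    have hgb : gronwallBound 0 C ε π = ε / C * (exp (C * π) - 1) := by
      rw [gronwallBound_of_K_ne_0 hCpos.ne']; simp
    rw [hgb] at key
    calc WW u2 π - WW u1 π ≤ ε / C * (exp (C * π) - 1) := key
      _ = KK * |lam - mu| := by rw [hε, hKK]; ring
  -- conclude continuity
  apply continuousAt_of_locally_lipschitz one_pos KK
  intro lam hlam
  have h1 : |lam - lam0| ≤ 1 := by
    rw [Real.dist_eq] at hlam; exact hlam.le
  have h2 := hlip lam lam0 h1 (by simp)
  have h3 := hlip lam0 lam (by simp) h1
  rw [Real.dist_eq, Real.dist_eq]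
  rw [abs_le]
  constructor
  · have : |lam0 - lam| = |lam - lam0| := abs_sub_comm _ _
    rw [this] at h3
    linarith
  · linarith

section wrappers
variable {f : ℝ → ℝ} (hf : ContDiff ℝ 2 f) (WW : (ℝ → ℝ) → ℝ → ℝ)
    (hWW0 : ∀ u : ℝ → ℝ, ContinuousOn u (Icc 0 π) → WW u 0 = 0)
    (hWW : ∀ u : ℝ → ℝ, ContinuousOn u (Icc 0 π) → ∀ t ∈ Icc (0:ℝ) π,
      HasDerivWithinAt (WW u)
        (cos (WW u t) ^ 2 - deriv f (u t) * sin (WW u t) ^ 2) (Icc 0 π) t)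

include hf hWW0 hWW

lemma WW_le {u v : ℝ → ℝ} (hu : Continuous u) (hv : Continuous v)
    {C ε : ℝ} (hε : 0 ≤ ε) (hC : ∀ t ∈ Icc 0 π, 1 + |deriv f (u t)| ≤ C)
    (hq : ∀ t ∈ Icc 0 π, deriv f (u t) ≤ deriv f (v t) + ε) :
    WW v π - WW u π ≤ gronwallBound 0 C ε π := by
  exact prufer_le (q1 := fun t => deriv f (u t)) (q2 := fun t => deriv f (v t)) hε hC hq
    (by rw [hWW0 u hu.continuousOn, hWW0 v hv.continuousOn])
    (hWW u hu.continuousOn) (hWW v hv.continuousOn) π (right_mem_Icc.2 Real.pi_pos.le)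

lemma WW_mono {u v : ℝ → ℝ} (hu : Continuous u) (hv : Continuous v)
    (hq : ∀ t ∈ Icc 0 π, deriv f (u t) ≤ deriv f (v t)) :
    WW v π ≤ WW u π := by
  obtain ⟨B, hB0, hB⟩ := bound_on_Icc (a := (0:ℝ)) (b := π)
    (((hf.continuous_deriv one_le_two).comp hu).continuousOn (s := Icc 0 π)).abs
  have h := WW_le hf WW hWW0 hWW hu hv (le_refl (0:ℝ)) (C := 1 + B)
    (fun t ht => by
      have := hB t ht
      simp only [Function.comp, abs_abs] at this
      linarith)
    (fun t ht => by rw [add_zero]; exact hq t ht)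
  rw [gronwallBound_ε0_δ0] at h
  linarith

lemma WW_lt {u v : ℝ → ℝ} (hu : Continuous u) (hv : Continuous v)
    (hq : ∀ t ∈ Icc 0 π, deriv f (u t) ≤ deriv f (v t))
    (hqs : ∀ t ∈ Ioo (0:ℝ) π, deriv f (u t) < deriv f (v t)) :
    WW v π < WW u π := by
  obtain ⟨B, hB0, hB⟩ := bound_on_Icc (a := (0:ℝ)) (b := π)
    (((hf.continuous_deriv one_le_two).comp hu).continuousOn (s := Icc 0 π)).abs
  exact prufer_lt (q1 := fun t => deriv f (u t)) (q2 := fun t => deriv f (v t)) (C := 1 + B)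
    (fun t ht => by
      have := hB t ht
      simp only [Function.comp, abs_abs] at this
      linarith)
    hq hqs
    ((hf.continuous_deriv one_le_two).comp hu).continuousOn
    ((hf.continuous_deriv one_le_two).comp hv).continuousOn
    (by rw [hWW0 u hu.continuousOn, hWW0 v hv.continuousOn])
    (hWW u hu.continuousOn) (hWW v hv.continuousOn)

end wrappers

set_option maxHeartbeats 2000000 in
/-- for f'' < 0 or f'' > 0 and p ∈ X positive on (0,π), if
M_θ = {u : W(u)(π) = θ} is nonempty then the projection along p is a bijection
M_θ → H: every line {h + λp} meets M_θ exactly once, and transversally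
(λ ↦ W(h+λp)(π) is strictly monotone). -/
theorem level_set_graph_over_hyperplane (f p : ℝ → ℝ) (θ : ℝ)
    (hf : ContDiff ℝ 2 f)
    (hconv : (∀ s : ℝ, deriv (deriv f) s < 0) ∨ (∀ s : ℝ, 0 < deriv (deriv f) s))
    (hp : ContDiff ℝ 2 p) (hp0 : p 0 = 0) (hpπ : p π = 0)
    (hppos : ∀ t ∈ Ioo (0:ℝ) π, 0 < p t)
    (WW : (ℝ → ℝ) → ℝ → ℝ)
    (hWW0 : ∀ u : ℝ → ℝ, ContinuousOn u (Icc 0 π) → WW u 0 = 0)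
    (hWW : ∀ u : ℝ → ℝ, ContinuousOn u (Icc 0 π) → ∀ t ∈ Icc (0:ℝ) π,
      HasDerivWithinAt (WW u)
        (cos (WW u t) ^ 2 - deriv f (u t) * sin (WW u t) ^ 2) (Icc 0 π) t)
    (hne : ∃ u : ℝ → ℝ, ContDiff ℝ 2 u ∧ u 0 = 0 ∧ u π = 0 ∧ WW u π = θ) :
    ∀ h : ℝ → ℝ, ContDiff ℝ 2 h → h 0 = 0 → h π = 0 →
      (∃! lam : ℝ, WW (fun t => h t + lam * p t) π = θ) ∧
      (StrictMono (fun lam => WW (fun t => h t + lam * p t) π) ∨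
        StrictAnti (fun lam => WW (fun t => h t + lam * p t) π)) := by
  intro h hh2 hh0 hhπ
  have hπ : (0:ℝ) < π := Real.pi_pos
  have hhc : Continuous h := hh2.continuous
  have hpc : Continuous p := hp.continuous
  have hpnn : ∀ t ∈ Icc (0:ℝ) π, 0 ≤ p t := by
    intro t ht
    rcases eq_or_lt_of_le ht.1 with h0 | h0
    · rw [← h0, hp0]
    rcases eq_or_lt_of_le ht.2 with h1 | h1
    · rw [h1, hpπ]
    · exact (hppos t ⟨h0, h1⟩).le
  obtain ⟨u₀, hu₀2, hu₀0, hu₀π, hu₀θ⟩ := hne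
  have hu₀c : Continuous u₀ := hu₀2.continuous
  set V : ℝ → ℝ := fun lam => WW (fun t => h t + lam * p t) π with hV
  have hVc : Continuous V := V_cont hf hpc hhc WW hWW0 hWW
  have hlinec : ∀ lam : ℝ, Continuous fun t => h t + lam * p t := by
    intro lam; fun_prop
  -- global bounds
  obtain ⟨Bu, hBu0, hBu⟩ := bound_on_Icc (a := (0:ℝ)) (b := π) hu₀c.continuousOn
  obtain ⟨Bp, hBp0, hBp⟩ := bound_on_Icc (a := (0:ℝ)) (b := π) hpc.continuousOn
  obtain ⟨Bh, hBh0, hBh⟩ := bound_on_Icc (a := (0:ℝ)) (b := π) hhc.continuousOn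
  set M : ℝ := Bu + Bp + Bh with hM
  have hM0 : 0 ≤ M := by positivity
  obtain ⟨B, hB0, hB⟩ := bound_on_Icc (a := -M) (b := M)
    (hf.continuous_deriv one_le_two).continuousOn
  obtain ⟨L, hL0, hL⟩ := lip_deriv hf M
  set C : ℝ := 1 + B with hC
  have hCpos : (0:ℝ) < C := by positivity
  set KK : ℝ := (exp (C * π) - 1) / C with hKK
  have hKK0 : 0 ≤ KK := by
    have : (1:ℝ) ≤ exp (C * π) := by
      rw [← exp_zero]; exact exp_le_exp.2 (by positivity)
    have h2 : 0 < C := hCpos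
    apply div_nonneg (by linarith) h2.le
  have hgb : ∀ ε : ℝ, gronwallBound 0 C ε π = ε * KK := by
    intro ε
    rw [gronwallBound_of_K_ne_0 hCpos.ne']
    rw [hKK]; field_simp; ring
  have hCb : ∀ w : ℝ → ℝ, (∀ t ∈ Icc (0:ℝ) π, |w t| ≤ M) →
      ∀ t ∈ Icc (0:ℝ) π, 1 + |deriv f (w t)| ≤ C := by
    intro w hw t ht
    have := hB (w t) (abs_le.1 (hw t ht))
    rw [hC]; linarith
  -- the two auxiliary functions
  set u₁ : ℝ → ℝ := fun t => u₀ t + p t with hu₁def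
  set u₂ : ℝ → ℝ := fun t => u₀ t - p t with hu₂def
  have hu₁c : Continuous u₁ := by rw [hu₁def]; fun_prop
  have hu₂c : Continuous u₂ := by rw [hu₂def]; fun_prop
  have hu₁M : ∀ t ∈ Icc (0:ℝ) π, |u₁ t| ≤ M := by
    intro t ht
    have := hBu t ht; have := hBp t ht; have := abs_add_le (u₀ t) (p t)
    rw [hM]; simp only [hu₁def]; rw [hM] at *
    calc |u₀ t + p t| ≤ |u₀ t| + |p t| := abs_add_le _ _
      _ ≤ Bu + Bp + Bh := by linarith
  have hu₂M : ∀ t ∈ Icc (0:ℝ) π, |u₂ t| ≤ M := by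
    intro t ht
    have := hBu t ht; have := hBp t ht
    calc |u₂ t| = |u₀ t - p t| := rfl
      _ ≤ |u₀ t| + |p t| := abs_sub _ _
      _ ≤ Bu + Bp + Bh := by linarith
  have hhM : ∀ t ∈ Icc (0:ℝ) π, |h t| ≤ M := by
    intro t ht
    have := hBh t ht
    calc |h t| ≤ Bh := this
      _ ≤ Bu + Bp + Bh := by linarith
  have hu₀u₁ : ∀ t ∈ Icc (0:ℝ) π, u₀ t ≤ u₁ t := by
    intro t ht
    have := hpnn t ht
    simp only [hu₁def]; linarith
  have hu₀u₁s : ∀ t ∈ Ioo (0:ℝ) π, u₀ t < u₁ t := by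
    intro t ht
    have := hppos t ht
    simp only [hu₁def]; linarith
  have hu₂u₀ : ∀ t ∈ Icc (0:ℝ) π, u₂ t ≤ u₀ t := by
    intro t ht; have := hpnn t ht; simp only [hu₂def]; linarith
  have hu₂u₀s : ∀ t ∈ Ioo (0:ℝ) π, u₂ t < u₀ t := by
    intro t ht; have := hppos t ht; simp only [hu₂def]; linarith
  have hu₁0 : u₁ 0 = h 0 := by simp [hu₁def, hu₀0, hp0, hh0]
  have hu₁π : u₁ π = h π := by simp [hu₁def, hu₀π, hpπ, hhπ]
  have hnu₂0 : -u₂ 0 = -h 0 := by simp [hu₂def, hu₀0, hp0, hh0]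
  have hnu₂π : -u₂ π = -h π := by simp [hu₂def, hu₀π, hpπ, hhπ]
  rcases hconv with hneg | hpos
  · -- f'' < 0 : deriv f strictly antitone, V strictly monotone
    have hanti : StrictAnti (deriv f) := strictAnti_of_deriv_neg hneg
    have hmonoV : StrictMono V := by
      intro a b hab
      exact WW_lt hf WW hWW0 hWW (hlinec b) (hlinec a)
        (fun t ht => hanti.antitone
          (by have := mul_le_mul_of_nonneg_right hab.le (hpnn t ht); linarith))
        (fun t ht => hanti
          (by have := mul_lt_mul_of_pos_right hab (hppos t ht); linarith))
    have hθ₁ : θ < WW u₁ π := by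
      have := WW_lt hf WW hWW0 hWW hu₁c hu₀c
        (fun t ht => hanti.antitone (hu₀u₁ t ht))
        (fun t ht => hanti (hu₀u₁s t ht))
      rwa [hu₀θ] at this
    have hθ₂ : WW u₂ π < θ := by
      have := WW_lt hf WW hWW0 hWW hu₀c hu₂c
        (fun t ht => hanti.antitone (hu₂u₀ t ht))
        (fun t ht => hanti (hu₂u₀s t ht))
      rwa [hu₀θ] at this
    -- plus side: V lamP > θ
    set γ : ℝ := WW u₁ π - θ with hγdef
    have hγ : 0 < γ := by rw [hγdef]; linarith
    set ρ : ℝ := γ / (L * KK + 1) with hρdef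
    have hρ : 0 < ρ := by rw [hρdef]; positivity
    obtain ⟨lamP, hlamP0, hlamP⟩ := approx_lemma hu₁c hhc hpc hpnn hppos hu₁0 hu₁π hρ
    set v : ℝ → ℝ := fun t => min (u₁ t) (h t + lamP * p t) with hvdef
    have hvc : Continuous v := by rw [hvdef]; exact hu₁c.min (hlinec lamP)
    have hvM : ∀ t ∈ Icc (0:ℝ) π, |v t| ≤ M := by
      intro t ht
      rw [abs_le]
      refine ⟨le_min (by linarith [(abs_le.1 (hu₁M t ht)).1]) ?_, ?_⟩
      · have h1 := (abs_le.1 (hhM t ht)).1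
        have h2 : 0 ≤ lamP * p t := mul_nonneg hlamP0 (hpnn t ht)
        linarith
      · calc v t ≤ u₁ t := min_le_left _ _
          _ ≤ M := (abs_le.1 (hu₁M t ht)).2
    have hstep1 : WW v π ≤ V lamP :=
      WW_mono hf WW hWW0 hWW (hlinec lamP) hvc
        (fun t ht => hanti.antitone (min_le_right _ _))
    have hstep2 : WW u₁ π - WW v π ≤ L * ρ * KK := by
      have hle := WW_le hf WW hWW0 hWW hvc hu₁c (C := C) (ε := L * ρ)
        (mul_nonneg hL0 hρ.le) (hCb v hvM)
        (fun t ht => by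
          have h1 := hL (v t) (u₁ t) (hvM t ht) (hu₁M t ht)
          have h2 : 0 ≤ u₁ t - v t := by
            have := min_le_left (u₁ t) (h t + lamP * p t)
            simp only [hvdef]; linarith
          have h3 : u₁ t - v t ≤ ρ := hlamP t ht
          have h4 : |v t - u₁ t| ≤ ρ := by rw [abs_sub_comm, abs_of_nonneg h2]; exact h3
          have h5 : L * |v t - u₁ t| ≤ L * ρ := mul_le_mul_of_nonneg_left h4 hL0
          have h6 := (abs_le.1 h1).2
          have h7 := le_abs_self (deriv f (v t) - deriv f (u₁ t))
          linarith)
      rw [hgb] at hle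
      linarith
    have hVP : θ < V lamP := by
      have hsp : ρ * (L * KK + 1) = γ :=
        div_mul_cancel₀ _ (by positivity : (L * KK + 1) ≠ 0)
      have hkey : L * ρ * KK < γ := by nlinarith [hρ]
      rw [hγdef] at hkey
      linarith
    -- minus side: V (-lamM) < θ
    set γ₂ : ℝ := θ - WW u₂ π with hγ₂def
    have hγ₂ : 0 < γ₂ := by rw [hγ₂def]; linarith
    set ρ₂ : ℝ := γ₂ / (L * KK + 1) with hρ₂def
    have hρ₂ : 0 < ρ₂ := by rw [hρ₂def]; positivity
    obtain ⟨lamM, hlamM0, hlamM⟩ := approx_lemma (u := fun t => -u₂ t) (h := fun t => -h t)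
      (by fun_prop) (by fun_prop) hpc hpnn hppos (by simpa using hnu₂0) (by simpa using hnu₂π) hρ₂
    set v₂ : ℝ → ℝ := fun t => max (u₂ t) (h t + -lamM * p t) with hv₂def
    have hv₂c : Continuous v₂ := by rw [hv₂def]; exact hu₂c.max (hlinec (-lamM))
    have hv₂ρ : ∀ t ∈ Icc (0:ℝ) π, v₂ t - u₂ t ≤ ρ₂ ∧ 0 ≤ v₂ t - u₂ t := by
      intro t ht
      have h1 : -u₂ t - min (-u₂ t) (-h t + lamM * p t) ≤ ρ₂ := hlamM t ht
      have h2 : min (-u₂ t) (-h t + lamM * p t) = -(max (u₂ t) (h t + -lamM * p t)) := by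
        have he : -h t + lamM * p t = -(h t + -lamM * p t) := by ring
        rw [he, min_neg_neg]
      rw [h2] at h1
      constructor
      · simp only [hv₂def]; linarith
      · simp only [hv₂def]; linarith [le_max_left (u₂ t) (h t + -lamM * p t)]
    have hv₂M : ∀ t ∈ Icc (0:ℝ) π, |v₂ t| ≤ M := by
      intro t ht
      rw [abs_le]
      constructor
      · calc -M ≤ u₂ t := (abs_le.1 (hu₂M t ht)).1
          _ ≤ v₂ t := le_max_left _ _
      · apply max_le (abs_le.1 (hu₂M t ht)).2
        have h1 := (abs_le.1 (hhM t ht)).2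
        have h2 : -lamM * p t ≤ 0 := by
          have := hpnn t ht; nlinarith
        linarith
    have hstep1' : V (-lamM) ≤ WW v₂ π :=
      WW_mono hf WW hWW0 hWW hv₂c (hlinec (-lamM))
        (fun t ht => hanti.antitone (le_max_right _ _))
    have hstep2' : WW v₂ π - WW u₂ π ≤ L * ρ₂ * KK := by
      have hle := WW_le hf WW hWW0 hWW hu₂c hv₂c (C := C) (ε := L * ρ₂)
        (mul_nonneg hL0 hρ₂.le) (hCb u₂ hu₂M)
        (fun t ht => by
          have h1 := hL (u₂ t) (v₂ t) (hu₂M t ht) (hv₂M t ht)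
          have h4 : |u₂ t - v₂ t| ≤ ρ₂ := by
            rw [abs_sub_comm, abs_of_nonneg (hv₂ρ t ht).2]; exact (hv₂ρ t ht).1
          have h5 : L * |u₂ t - v₂ t| ≤ L * ρ₂ := mul_le_mul_of_nonneg_left h4 hL0
          have h6 := (abs_le.1 h1).2
          have h7 := le_abs_self (deriv f (u₂ t) - deriv f (v₂ t))
          linarith)
      rw [hgb] at hle
      linarith
    have hVM : V (-lamM) < θ := by
      have hsp : ρ₂ * (L * KK + 1) = γ₂ :=
        div_mul_cancel₀ _ (by positivity : (L * KK + 1) ≠ 0)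
      have hkey : L * ρ₂ * KK < γ₂ := by nlinarith [hρ₂]
      rw [hγ₂def] at hkey
      linarith
    have hab : -lamM ≤ lamP := le_trans (neg_nonpos.2 hlamM0) hlamP0
    have hsurj := intermediate_value_Icc hab hVc.continuousOn
    obtain ⟨lam, _, hlam⟩ := hsurj ⟨hVM.le, hVP.le⟩
    exact ⟨⟨lam, hlam, fun y hy => hmonoV.injective (hy.trans hlam.symm)⟩, Or.inl hmonoV⟩
  · -- f'' > 0 : deriv f strictly monotone, V strictly antitone
    have hmono : StrictMono (deriv f) := strictMono_of_deriv_pos hpos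
    have hantiV : StrictAnti V := by
      intro a b hab
      exact WW_lt hf WW hWW0 hWW (hlinec a) (hlinec b)
        (fun t ht => hmono.monotone
          (by have := mul_le_mul_of_nonneg_right hab.le (hpnn t ht); linarith))
        (fun t ht => hmono
          (by have := mul_lt_mul_of_pos_right hab (hppos t ht); linarith))
    have hθ₁ : WW u₁ π < θ := by
      have := WW_lt hf WW hWW0 hWW hu₀c hu₁c
        (fun t ht => hmono.monotone (hu₀u₁ t ht))
        (fun t ht => hmono (hu₀u₁s t ht))
      rwa [hu₀θ] at this
    have hθ₂ : θ < WW u₂ π := by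
      have := WW_lt hf WW hWW0 hWW hu₂c hu₀c
        (fun t ht => hmono.monotone (hu₂u₀ t ht))
        (fun t ht => hmono (hu₂u₀s t ht))
      rwa [hu₀θ] at this
    -- plus side: V lamP < θ
    set γ : ℝ := θ - WW u₁ π with hγdef
    have hγ : 0 < γ := by rw [hγdef]; linarith
    set ρ : ℝ := γ / (L * KK + 1) with hρdef
    have hρ : 0 < ρ := by rw [hρdef]; positivity
    obtain ⟨lamP, hlamP0, hlamP⟩ := approx_lemma hu₁c hhc hpc hpnn hppos hu₁0 hu₁π hρ
    set v : ℝ → ℝ := fun t => min (u₁ t) (h t + lamP * p t) with hvdef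
    have hvc : Continuous v := by rw [hvdef]; exact hu₁c.min (hlinec lamP)
    have hvM : ∀ t ∈ Icc (0:ℝ) π, |v t| ≤ M := by
      intro t ht
      rw [abs_le]
      refine ⟨le_min (by linarith [(abs_le.1 (hu₁M t ht)).1]) ?_, ?_⟩
      · have h1 := (abs_le.1 (hhM t ht)).1
        have h2 : 0 ≤ lamP * p t := mul_nonneg hlamP0 (hpnn t ht)
        linarith
      · calc v t ≤ u₁ t := min_le_left _ _
          _ ≤ M := (abs_le.1 (hu₁M t ht)).2
    have hstep1 : V lamP ≤ WW v π :=
      WW_mono hf WW hWW0 hWW hvc (hlinec lamP)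
        (fun t ht => hmono.monotone (min_le_right _ _))
    have hstep2 : WW v π - WW u₁ π ≤ L * ρ * KK := by
      have hle := WW_le hf WW hWW0 hWW hu₁c hvc (C := C) (ε := L * ρ)
        (mul_nonneg hL0 hρ.le) (hCb u₁ hu₁M)
        (fun t ht => by
          have h1 := hL (u₁ t) (v t) (hu₁M t ht) (hvM t ht)
          have h2 : 0 ≤ u₁ t - v t := by
            have := min_le_left (u₁ t) (h t + lamP * p t)
            simp only [hvdef]; linarith
          have h3 : u₁ t - v t ≤ ρ := hlamP t ht
          have h4 : |u₁ t - v t| ≤ ρ := by rwa [abs_of_nonneg h2]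
          have h5 : L * |u₁ t - v t| ≤ L * ρ := mul_le_mul_of_nonneg_left h4 hL0
          have h6 := (abs_le.1 h1).2
          have h7 := le_abs_self (deriv f (u₁ t) - deriv f (v t))
          linarith)
      rw [hgb] at hle
      linarith
    have hVP : V lamP < θ := by
      have hsp : ρ * (L * KK + 1) = γ :=
        div_mul_cancel₀ _ (by positivity : (L * KK + 1) ≠ 0)
      have hkey : L * ρ * KK < γ := by nlinarith [hρ]
      rw [hγdef] at hkey
      linarith
    -- minus side: V (-lamM) > θ
    set γ₂ : ℝ := WW u₂ π - θ with hγ₂def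
    have hγ₂ : 0 < γ₂ := by rw [hγ₂def]; linarith
    set ρ₂ : ℝ := γ₂ / (L * KK + 1) with hρ₂def
    have hρ₂ : 0 < ρ₂ := by rw [hρ₂def]; positivity
    obtain ⟨lamM, hlamM0, hlamM⟩ := approx_lemma (u := fun t => -u₂ t) (h := fun t => -h t)
      (by fun_prop) (by fun_prop) hpc hpnn hppos (by simpa using hnu₂0) (by simpa using hnu₂π) hρ₂
    set v₂ : ℝ → ℝ := fun t => max (u₂ t) (h t + -lamM * p t) with hv₂def
    have hv₂c : Continuous v₂ := by rw [hv₂def]; exact hu₂c.max (hlinec (-lamM))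
    have hv₂ρ : ∀ t ∈ Icc (0:ℝ) π, v₂ t - u₂ t ≤ ρ₂ ∧ 0 ≤ v₂ t - u₂ t := by
      intro t ht
      have h1 : -u₂ t - min (-u₂ t) (-h t + lamM * p t) ≤ ρ₂ := hlamM t ht
      have h2 : min (-u₂ t) (-h t + lamM * p t) = -(max (u₂ t) (h t + -lamM * p t)) := by
        have he : -h t + lamM * p t = -(h t + -lamM * p t) := by ring
        rw [he, min_neg_neg]
      rw [h2] at h1
      constructor
      · simp only [hv₂def]; linarith
      · simp only [hv₂def]; linarith [le_max_left (u₂ t) (h t + -lamM * p t)]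
    have hv₂M : ∀ t ∈ Icc (0:ℝ) π, |v₂ t| ≤ M := by
      intro t ht
      rw [abs_le]
      constructor
      · calc -M ≤ u₂ t := (abs_le.1 (hu₂M t ht)).1
          _ ≤ v₂ t := le_max_left _ _
      · apply max_le (abs_le.1 (hu₂M t ht)).2
        have h1 := (abs_le.1 (hhM t ht)).2
        have h2 : -lamM * p t ≤ 0 := by
          have := hpnn t ht; nlinarith
        linarith
    have hstep1' : WW v₂ π ≤ V (-lamM) :=
      WW_mono hf WW hWW0 hWW (hlinec (-lamM)) hv₂c
        (fun t ht => hmono.monotone (le_max_right _ _))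
    have hstep2' : WW u₂ π - WW v₂ π ≤ L * ρ₂ * KK := by
      have hle := WW_le hf WW hWW0 hWW hv₂c hu₂c (C := C) (ε := L * ρ₂)
        (mul_nonneg hL0 hρ₂.le) (hCb v₂ hv₂M)
        (fun t ht => by
          have h1 := hL (v₂ t) (u₂ t) (hv₂M t ht) (hu₂M t ht)
          have h4 : |v₂ t - u₂ t| ≤ ρ₂ := by
            rw [abs_of_nonneg (hv₂ρ t ht).2]; exact (hv₂ρ t ht).1
          have h5 : L * |v₂ t - u₂ t| ≤ L * ρ₂ := mul_le_mul_of_nonneg_left h4 hL0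
          have h6 := (abs_le.1 h1).2
          have h7 := le_abs_self (deriv f (v₂ t) - deriv f (u₂ t))
          linarith)
      rw [hgb] at hle
      linarith
    have hVM : θ < V (-lamM) := by
      have hsp : ρ₂ * (L * KK + 1) = γ₂ :=
        div_mul_cancel₀ _ (by positivity : (L * KK + 1) ≠ 0)
      have hkey : L * ρ₂ * KK < γ₂ := by nlinarith [hρ₂]
      rw [hγ₂def] at hkey
      linarith
    have hab : -lamM ≤ lamP := le_trans (neg_nonpos.2 hlamM0) hlamP0
    have hsurj := intermediate_value_Icc' hab hVc.continuousOn
    obtain ⟨lam, _, hlam⟩ := hsurj ⟨hVP.le, hVM.le⟩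
    exact ⟨⟨lam, hlam, fun y hy => hantiV.injective (hy.trans hlam.symm)⟩, Or.inr hantiV⟩
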